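/- arXiv:2505.15509 — 3 statements merged into one kernel-verified Lean document; each statement's English description precedes it below -/
import Mathlib

section
/- Let B ⊆ ℝ^d and A ⊆ ℝ^m be open and nonempty, let g : B → A be intrinsic Lipschitz with constant L_g, and f : A → ℝ^k be intrinsic Lipschitz with constant L_f. Then f ∘ g : B → ℝ^k is intrinsic Lipschitz with constant L_f · L_g. -/
/-! An intrinsic `L`-Lipschitz map `g` on `B` multiplies the length of paths in `B` by at most
`L`: along a partition of `[0,1]`, each jump of `g ∘ γ` is at most `L` times the intrinsic distance
of its endpoints, hence at most `L` times the variation of `γ` on that subinterval. When `γ` has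
finite length, the same local bound makes `g ∘ γ` continuous, so `g ∘ γ` is admissible for the
intrinsic distance of `A`, and `ρ_A (g x, g y) ≤ L · ρ_B (x, y)`. The composite bound follows by
chaining this with the intrinsic Lipschitz bound of `f`. -/

open scoped ENNReal NNReal

/-- The length (total variation) of a continuous path `γ` on `[0,1]`, valued in `[0,∞]`. -/
noncomputable def pathLength {E : Type*} [NormedAddCommGroup E] (γ : ℝ → E) : ℝ≥0∞ :=
  eVariationOn γ (Set.Icc 0 1)

/-- The intrinsic metric of a set `A`: the infimum of lengths of continuous paths in `A`
joining two points. -/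
noncomputable def intrinsicDist {E : Type*} [NormedAddCommGroup E]
    (A : Set E) (x y : E) : ℝ≥0∞ :=
  ⨅ (γ : ℝ → E) (_ : ContinuousOn γ (Set.Icc 0 1)) (_ : Set.MapsTo γ (Set.Icc 0 1) A)
    (_ : γ 0 = x) (_ : γ 1 = y), pathLength γ

/-- `f` is intrinsic Lipschitz continuous on `A` with constant `L`. -/
def IntrinsicLipWith {E F : Type*} [NormedAddCommGroup E] [PseudoEMetricSpace F]
    (L : ℝ≥0) (f : E → F) (A : Set E) : Prop :=
  ∀ x ∈ A, ∀ y ∈ A, edist (f x) (f y) ≤ L * intrinsicDist A x y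

open Set Filter Topology

section IntrinsicDist

variable {E : Type*} [NormedAddCommGroup E] {A : Set E} {x y : E} {γ : ℝ → E}

lemma intrinsicDist_le_pathLength (hc : ContinuousOn γ (Icc 0 1)) (hm : MapsTo γ (Icc 0 1) A)
    (h0 : γ 0 = x) (h1 : γ 1 = y) : intrinsicDist A x y ≤ pathLength γ :=
  iInf_le_of_le γ <| iInf_le_of_le hc <| iInf_le_of_le hm <| iInf_le_of_le h0 <| iInf_le _ h1

lemma intrinsicDist_self (hx : x ∈ A) : intrinsicDist A x x = 0 :=
  nonpos_iff_eq_zero.1 <| (intrinsicDist_le_pathLength continuousOn_const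
    (fun _ _ ↦ hx) rfl rfl).trans_eq <| eVariationOn.constant_on <| by simp

lemma intrinsicDist_le_eVariationOn_Icc (hc : ContinuousOn γ (Icc 0 1))
    (hm : MapsTo γ (Icc 0 1) A) {s t : ℝ} (hs : s ∈ Icc (0 : ℝ) 1) (ht : t ∈ Icc (0 : ℝ) 1)
    (hst : s ≤ t) : intrinsicDist A (γ s) (γ t) ≤ eVariationOn γ (Icc s t) := by
  set σ : ℝ → ℝ := fun u ↦ s + u * (t - s)
  have hσ_mono : Monotone σ := fun a b hab ↦ by simp only [σ]; nlinarith
  have hσ_maps : MapsTo σ (Icc 0 1) (Icc s t) := fun u ⟨hu₀, hu₁⟩ ↦ by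
    simp only [σ, mem_Icc]; constructor <;> nlinarith
  have hsub : Icc s t ⊆ Icc (0 : ℝ) 1 := Icc_subset_Icc hs.1 ht.2
  have hσ_cont : ContinuousOn (γ ∘ σ) (Icc 0 1) :=
    hc.comp (by fun_prop) (hσ_maps.mono_right hsub)
  refine (intrinsicDist_le_pathLength hσ_cont (hm.comp (hσ_maps.mono_right hsub))
    (by simp [σ]) (by simp [σ])).trans ?_
  exact eVariationOn.comp_le_of_monotoneOn γ σ (hσ_mono.monotoneOn _) hσ_maps

end IntrinsicDist

namespace IntrinsicLipWith

variable {E F G : Type*} [NormedAddCommGroup E] {B : Set E} {γ : ℝ → E}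

section PseudoEMetric

variable [PseudoEMetricSpace F] {L : ℝ≥0} {g : E → F}

lemma edist_comp_le_eVariationOn_Icc (hg : IntrinsicLipWith L g B)
    (hc : ContinuousOn γ (Icc 0 1)) (hm : MapsTo γ (Icc 0 1) B) {s t : ℝ}
    (hs : s ∈ Icc (0 : ℝ) 1) (ht : t ∈ Icc (0 : ℝ) 1) (hst : s ≤ t) :
    edist (g (γ s)) (g (γ t)) ≤ L * eVariationOn γ (Icc s t) :=
  (hg _ (hm hs) _ (hm ht)).trans <| by
    gcongr; exact intrinsicDist_le_eVariationOn_Icc hc hm hs ht hst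

lemma eVariationOn_comp_le (hg : IntrinsicLipWith L g B) (hc : ContinuousOn γ (Icc 0 1))
    (hm : MapsTo γ (Icc 0 1) B) :
    eVariationOn (g ∘ γ) (Icc 0 1) ≤ L * eVariationOn γ (Icc 0 1) := by
  refine iSup_le fun ⟨n, u, hu, us⟩ ↦ ?_
  calc ∑ i ∈ Finset.range n, edist (g (γ (u (i + 1)))) (g (γ (u i)))
      ≤ ∑ i ∈ Finset.range n, L * eVariationOn γ (Icc (u i) (u (i + 1))) := by
        gcongr with i
        rw [edist_comm]
        exact hg.edist_comp_le_eVariationOn_Icc hc hm (us i) (us (i + 1)) (hu i.le_succ)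
    _ = L * eVariationOn γ (Icc (u 0) (u n)) := by
        rw [← Finset.mul_sum, eVariationOn.sum' γ hu]
    _ ≤ L * eVariationOn γ (Icc 0 1) := by
        gcongr; exact eVariationOn.mono γ (Icc_subset_Icc (us 0).1 (us n).2)

lemma continuousOn_comp (hg : IntrinsicLipWith L g B) (hc : ContinuousOn γ (Icc 0 1))
    (hm : MapsTo γ (Icc 0 1) B) (hγ : BoundedVariationOn γ (Icc 0 1)) :
    ContinuousOn (g ∘ γ) (Icc 0 1) := by
  intro s hs
  set V : ℝ → ℝ≥0∞ := fun t ↦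
    eVariationOn γ (Icc 0 1 ∩ Icc t s) + eVariationOn γ (Icc 0 1 ∩ Icc s t)
  have hV : Tendsto V (𝓝[Icc 0 1] s) (𝓝 0) := by
    simpa using (hγ.tendsto_eVariationOn_Icc_zero_left ((hc s hs).mono inter_subset_left)).add
      (hγ.tendsto_eVariationOn_Icc_zero_right s ((hc s hs).mono inter_subset_left))
  have hle : ∀ t ∈ Icc (0 : ℝ) 1, edist (g (γ t)) (g (γ s)) ≤ L * V t := by
    intro t ht
    rcases le_total t s with hts | hst
    · calc _ ≤ L * eVariationOn γ (Icc t s) := hg.edist_comp_le_eVariationOn_Icc hc hm ht hs hts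
        _ ≤ L * V t := by
          gcongr
          simp only [V, inter_eq_right.2 (Icc_subset_Icc ht.1 hs.2)]
          exact le_self_add
    · calc _ = edist (g (γ s)) (g (γ t)) := edist_comm _ _
        _ ≤ L * eVariationOn γ (Icc s t) := hg.edist_comp_le_eVariationOn_Icc hc hm hs ht hst
        _ ≤ L * V t := by
          gcongr
          simp only [V, inter_eq_right.2 (Icc_subset_Icc hs.1 ht.2)]
          exact le_add_self
  have hLV : Tendsto (fun t ↦ (L : ℝ≥0∞) * V t) (𝓝[Icc 0 1] s) (𝓝 0) := by
    simpa using ENNReal.Tendsto.const_mul hV (Or.inr ENNReal.coe_ne_top)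
  exact tendsto_iff_edist_tendsto_0.2 <| tendsto_of_tendsto_of_tendsto_of_le_of_le'
    tendsto_const_nhds hLV (Eventually.of_forall fun _ ↦ zero_le)
    (eventually_nhdsWithin_of_forall hle)

end PseudoEMetric

lemma intrinsicDist_image_le [NormedAddCommGroup F] {A : Set F} {L : ℝ≥0} {g : E → F}
    (hg : IntrinsicLipWith L g B) (hmaps : MapsTo g B A) {x y : E} (hx : x ∈ B) (hy : y ∈ B) :
    intrinsicDist A (g x) (g y) ≤ L * intrinsicDist B x y := by
  -- For `L = 0` the infimum defining `intrinsicDist B x y` may be empty, and `0 * ⊤ = 0`.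
  rcases eq_or_ne L 0 with rfl | hL
  · have hxy : g x = g y := by simpa using hg x hx y hy
    rw [hxy, intrinsicDist_self (hmaps hy)]
    exact zero_le
  conv_rhs => rw [intrinsicDist]
  simp only [ENNReal.mul_iInf_of_ne (ENNReal.coe_ne_zero.2 hL) ENNReal.coe_ne_top]
  refine le_iInf fun γ ↦ le_iInf fun hc ↦ le_iInf fun hm ↦ le_iInf fun h0 ↦ le_iInf fun h1 ↦ ?_
  by_cases hγ : BoundedVariationOn γ (Icc 0 1)
  · exact (intrinsicDist_le_pathLength (hg.continuousOn_comp hc hm hγ) (hmaps.comp hm)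
      (by simp [h0]) (by simp [h1])).trans (hg.eVariationOn_comp_le hc hm)
  · rw [pathLength, not_ne_iff.1 hγ, ENNReal.mul_top (ENNReal.coe_ne_zero.2 hL)]
    exact le_top

lemma comp [NormedAddCommGroup F] [PseudoEMetricSpace G] {A : Set F} {Lf Lg : ℝ≥0}
    {f : F → G} {g : E → F} (hf : IntrinsicLipWith Lf f A) (hg : IntrinsicLipWith Lg g B)
    (hmaps : MapsTo g B A) : IntrinsicLipWith (Lf * Lg) (f ∘ g) B := fun x hx y hy ↦
  calc edist (f (g x)) (f (g y)) ≤ Lf * intrinsicDist A (g x) (g y) :=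
        hf _ (hmaps hx) _ (hmaps hy)
    _ ≤ Lf * (Lg * intrinsicDist B x y) := by gcongr; exact hg.intrinsicDist_image_le hmaps hx hy
    _ = ↑(Lf * Lg) * intrinsicDist B x y := by rw [ENNReal.coe_mul, mul_assoc]

end IntrinsicLipWith

theorem stmt8_general {d m k : ℕ} (B : Set (EuclideanSpace ℝ (Fin d)))
    (A : Set (EuclideanSpace ℝ (Fin m)))
    (g : EuclideanSpace ℝ (Fin d) → EuclideanSpace ℝ (Fin m))
    (f : EuclideanSpace ℝ (Fin m) → EuclideanSpace ℝ (Fin k))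
    (Lg Lf : ℝ≥0) (hmaps : Set.MapsTo g B A)
    (hg : IntrinsicLipWith Lg g B) (hf : IntrinsicLipWith Lf f A) :
    IntrinsicLipWith (Lf * Lg) (f ∘ g) B :=
  hf.comp hg hmaps

theorem stmt8 {d m k : ℕ} (B : Set (EuclideanSpace ℝ (Fin d)))
    (A : Set (EuclideanSpace ℝ (Fin m)))
    (hB : B.Nonempty) (hA : A.Nonempty) (hBopen : IsOpen B) (hAopen : IsOpen A)
    (g : EuclideanSpace ℝ (Fin d) → EuclideanSpace ℝ (Fin m))
    (f : EuclideanSpace ℝ (Fin m) → EuclideanSpace ℝ (Fin k))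
    (Lg Lf : ℝ≥0) (hmaps : Set.MapsTo g B A)
    (hg : IntrinsicLipWith Lg g B) (hf : IntrinsicLipWith Lf f A) :
    IntrinsicLipWith (Lf * Lg) (f ∘ g) B :=
  stmt8_general B A g f Lg Lf hmaps hg hf
end

section
/- Let G : ℝ^d → ℝ^d be a C¹-diffeomorphism which is C² on ℝ^d \ Θ for a set Θ ⊆ ℝ^d with G(Θ) = Θ and G⁻¹(Θ) = Θ, and let σ : ℝ^d → ℝ^{d×d} be C¹ on ℝ^d \ Θ satisfying the commutativity condition σ_{j₁}'(x) σ_{j₂}(x) = σ_{j₂}'(x) σ_{j₁}(x) for all x ∈ ℝ^d \ Θ and all j₁, j₂ ∈ {1,…,d}. Define σ_G = (G'σ) ∘ G⁻¹. Then σ_G also satisfies the commutativity condition outside Θ: ((σ_G)_{j₁})'(x)(σ_G)_{j₂}(x) = ((σ_G)_{j₂})'(x)(σ_G)_{j₁}(x) for all x ∈ ℝ^d \ Θ. -/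
/-!
The pushed-forward fields `σ_G = (G'σ) ∘ G⁻¹` pull back along `G` to the original fields `σ`,
and pulling back along a `C²` map commutes with the Lie bracket because its second derivative is
symmetric. Hence the bracket of `(σ_G)_{j₂}` and `(σ_G)_{j₁}` at `x` is `G'(G⁻¹ x)` applied to
the bracket of `σ_{j₂}` and `σ_{j₁}` at `G⁻¹ x`, which is the commutativity defect and vanishes.
-/

open Function

section

variable {𝕜 : Type*} [NontriviallyNormedField 𝕜]
  {E : Type*} [NormedAddCommGroup E] [NormedSpace 𝕜 E]
  {F : Type*} [NormedAddCommGroup F] [NormedSpace 𝕜 F]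

theorem fderiv_comp_fderiv_of_leftInverse {f : E → F} {g : F → E} (hgf : LeftInverse g f)
    {x : E} (hg : DifferentiableAt 𝕜 g (f x)) (hf : DifferentiableAt 𝕜 f x) :
    fderiv 𝕜 g (f x) ∘L fderiv 𝕜 f x = .id 𝕜 E := by
  rw [← fderiv_comp x hg hf, hgf.comp_eq_id, fderiv_id]

theorem isInvertible_fderiv_of_leftInverse_of_rightInverse {f : E → F} {g : F → E}
    (hgf : LeftInverse g f) (hfg : RightInverse g f) {x : E}
    (hf : DifferentiableAt 𝕜 f x) (hg : DifferentiableAt 𝕜 g (f x)) :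
    (fderiv 𝕜 f x).IsInvertible := by
  refine .of_inverse (g := fderiv 𝕜 g (f x)) ?_ (fderiv_comp_fderiv_of_leftInverse hgf hg hf)
  have hf' : DifferentiableAt 𝕜 f (g (f x)) := by rwa [hgf x]
  simpa only [hgf x] using fderiv_comp_fderiv_of_leftInverse hfg hf' hg

namespace VectorField

variable (𝕜) in
noncomputable def pushforward (G : E → F) (Ginv : F → E) (V : E → E) (x : F) : F :=
  fderiv 𝕜 G (Ginv x) (V (Ginv x))

theorem pullback_pushforward {G : E → F} {Ginv : F → E} (hinv₁ : LeftInverse Ginv G)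
    (hinv₂ : RightInverse Ginv G) (hG : Differentiable 𝕜 G) (hGinv : Differentiable 𝕜 Ginv)
    (V : E → E) : pullback 𝕜 G (pushforward 𝕜 G Ginv V) = V := by
  ext1 y
  have hinv := isInvertible_fderiv_of_leftInverse_of_rightInverse hinv₁ hinv₂ (hG y) (hGinv _)
  rw [pullback, pushforward, hinv₁ y, hinv.inverse_apply_self]

theorem differentiableAt_pushforward {G : E → F} {Ginv : F → E} {V : E → E} {x : F}
    (hG : DifferentiableAt 𝕜 (fderiv 𝕜 G) (Ginv x)) (hV : DifferentiableAt 𝕜 V (Ginv x))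
    (hGinv : DifferentiableAt 𝕜 Ginv x) :
    DifferentiableAt 𝕜 (pushforward 𝕜 G Ginv V) x :=
  (hG.clm_apply hV).comp x hGinv

theorem lieBracket_pushforward [CompleteSpace E] {n : WithTop ℕ∞} {G : E → F} {Ginv : F → E}
    (hinv₁ : LeftInverse Ginv G) (hinv₂ : RightInverse Ginv G)
    (hG : Differentiable 𝕜 G) (hGinv : Differentiable 𝕜 Ginv)
    {V W : E → E} {x : F} (hn : minSmoothness 𝕜 2 ≤ n) (hG₂ : ContDiffAt 𝕜 n G (Ginv x))
    (hV : DifferentiableAt 𝕜 V (Ginv x)) (hW : DifferentiableAt 𝕜 W (Ginv x)) :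
    lieBracket 𝕜 (pushforward 𝕜 G Ginv V) (pushforward 𝕜 G Ginv W) x
      = fderiv 𝕜 G (Ginv x) (lieBracket 𝕜 V W (Ginv x)) := by
  have hG' : DifferentiableAt 𝕜 (fderiv 𝕜 G) (Ginv x) :=
    (hG₂.fderiv_right (m := 1) (le_minSmoothness.trans hn)).differentiableAt one_ne_zero
  have hpull := pullback_lieBracket hn (V := pushforward 𝕜 G Ginv V)
    (W := pushforward 𝕜 G Ginv W) hG₂
  rw [hinv₂ x, pullback_pushforward hinv₁ hinv₂ hG hGinv,
    pullback_pushforward hinv₁ hinv₂ hG hGinv] at hpull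
  specialize hpull (differentiableAt_pushforward hG' hV (hGinv x))
    (differentiableAt_pushforward hG' hW (hGinv x))
  rw [← hpull, fderiv_pullback _ _ _
    (isInvertible_fderiv_of_leftInverse_of_rightInverse hinv₁ hinv₂ (hG _) (hGinv _)), hinv₂ x]

end VectorField

end

theorem stmt13_general {d : ℕ} (Θ : Set (EuclideanSpace ℝ (Fin d)))
    (G Ginv : EuclideanSpace ℝ (Fin d) → EuclideanSpace ℝ (Fin d))
    (hinv₁ : Function.LeftInverse Ginv G) (hinv₂ : Function.RightInverse Ginv G)
    (hG : ContDiff ℝ 1 G) (hGinv : ContDiff ℝ 1 Ginv)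
    (hΘopen : IsOpen Θᶜ)
    (hG2 : ContDiffOn ℝ 2 G Θᶜ)
    (hGΘ : G '' Θ = Θ)
    -- `σcol j` is the `j`-th column of the matrix-valued map `σ : ℝ^d → ℝ^{d×d}`
    (σcol : Fin d → EuclideanSpace ℝ (Fin d) → EuclideanSpace ℝ (Fin d))
    (hσ : ∀ j, ContDiffOn ℝ 1 (σcol j) Θᶜ)
    (hcomm : ∀ j₁ j₂ : Fin d, ∀ x ∈ Θᶜ,
      fderiv ℝ (σcol j₁) x (σcol j₂ x) = fderiv ℝ (σcol j₂) x (σcol j₁ x)) :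
    -- the transformed diffusion coefficient `σ_G = (G'σ) ∘ G⁻¹` (columnwise) also satisfies
    -- the commutativity condition outside Θ
    ∀ j₁ j₂ : Fin d, ∀ x ∈ Θᶜ,
      fderiv ℝ (fun z => fderiv ℝ G (Ginv z) (σcol j₁ (Ginv z))) x
          (fderiv ℝ G (Ginv x) (σcol j₂ (Ginv x)))
        = fderiv ℝ (fun z => fderiv ℝ G (Ginv z) (σcol j₂ (Ginv z))) x
          (fderiv ℝ G (Ginv x) (σcol j₁ (Ginv x))) := by
  intro j₁ j₂ x hx
  have hy : Ginv x ∈ Θᶜ := fun hΘ => hx (hGΘ ▸ ⟨Ginv x, hΘ, hinv₂ x⟩)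
  have hy_nhds := hΘopen.mem_nhds hy
  have hσy j : DifferentiableAt ℝ (σcol j) (Ginv x) :=
    ((hσ j).contDiffAt hy_nhds).differentiableAt one_ne_zero
  have hbracket := VectorField.lieBracket_pushforward hinv₁ hinv₂ (hG.differentiable one_ne_zero)
    (hGinv.differentiable one_ne_zero) minSmoothness_of_isRCLikeNormedField.le
    (hG2.contDiffAt hy_nhds) (hσy j₂) (hσy j₁)
  have hσbracket : VectorField.lieBracket ℝ (σcol j₂) (σcol j₁) (Ginv x) = 0 :=
    sub_eq_zero.mpr (hcomm j₁ j₂ _ hy)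
  rw [hσbracket, map_zero] at hbracket
  exact sub_eq_zero.mp hbracket

theorem stmt13 {d : ℕ} (Θ : Set (EuclideanSpace ℝ (Fin d)))
    (G Ginv : EuclideanSpace ℝ (Fin d) → EuclideanSpace ℝ (Fin d))
    (hinv₁ : Function.LeftInverse Ginv G) (hinv₂ : Function.RightInverse Ginv G)
    (hG : ContDiff ℝ 1 G) (hGinv : ContDiff ℝ 1 Ginv)
    (hΘopen : IsOpen Θᶜ)
    (hG2 : ContDiffOn ℝ 2 G Θᶜ)
    (hGΘ : G '' Θ = Θ) (hGinvΘ : Ginv '' Θ = Θ)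
    -- `σcol j` is the `j`-th column of the matrix-valued map `σ : ℝ^d → ℝ^{d×d}`
    (σcol : Fin d → EuclideanSpace ℝ (Fin d) → EuclideanSpace ℝ (Fin d))
    (hσ : ∀ j, ContDiffOn ℝ 1 (σcol j) Θᶜ)
    (hcomm : ∀ j₁ j₂ : Fin d, ∀ x ∈ Θᶜ,
      fderiv ℝ (σcol j₁) x (σcol j₂ x) = fderiv ℝ (σcol j₂) x (σcol j₁ x)) :
    -- the transformed diffusion coefficient `σ_G = (G'σ) ∘ G⁻¹` (columnwise) also satisfies
    -- the commutativity condition outside Θ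
    ∀ j₁ j₂ : Fin d, ∀ x ∈ Θᶜ,
      fderiv ℝ (fun z => fderiv ℝ G (Ginv z) (σcol j₁ (Ginv z))) x
          (fderiv ℝ G (Ginv x) (σcol j₂ (Ginv x)))
        = fderiv ℝ (fun z => fderiv ℝ G (Ginv z) (σcol j₂ (Ginv z))) x
          (fderiv ℝ G (Ginv x) (σcol j₁ (Ginv x))) :=
  stmt13_general Θ G Ginv hinv₁ hinv₂ hG hGinv hΘopen hG2 hGΘ σcol hσ hcomm
end

section
/- Let M ⊆ ℝ^d be a C¹-hypersurface of positive reach and x ∈ M. If u ∈ ℝ^d is orthogonal to the tangent space T_x(M) and ‖u‖ < reach(M), then x + u has a unique nearest point in M, and that nearest point is x, i.e. pr_M(x + u) = x and dist(x + u, M) = ‖u‖. -/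
open scoped ENNReal NNReal

/-- `v` is a tangent vector to `M` at `x`: there is a `C¹` curve in `M` through `x`
with velocity `v`. -/
def IsTangentAt {d : ℕ} (M : Set (EuclideanSpace ℝ (Fin d)))
    (x v : EuclideanSpace ℝ (Fin d)) : Prop :=
  ∃ ε > (0:ℝ), ∃ γ : ℝ → EuclideanSpace ℝ (Fin d),
    Set.MapsTo γ (Set.Ioo (-ε) ε) M ∧ ContDiffOn ℝ 1 γ (Set.Ioo (-ε) ε) ∧
    γ 0 = x ∧ HasDerivAt γ v 0

/-- `M` is a `C¹`-hypersurface: locally a regular level set of a `C¹` function. -/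
def IsC1Hypersurface {d : ℕ} (M : Set (EuclideanSpace ℝ (Fin d))) : Prop :=
  M.Nonempty ∧ ∀ x ∈ M, ∃ U : Set (EuclideanSpace ℝ (Fin d)), IsOpen U ∧ x ∈ U ∧
    ∃ f : EuclideanSpace ℝ (Fin d) → ℝ, ContDiffOn ℝ 1 f U ∧
      (∀ y ∈ U, fderivWithin ℝ f U y ≠ 0) ∧ M ∩ U = {y ∈ U | f y = 0}

/-- `x` has a unique nearest point in `M`. -/
def HasUniqueNearest {d : ℕ} (M : Set (EuclideanSpace ℝ (Fin d)))
    (x : EuclideanSpace ℝ (Fin d)) : Prop :=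
  ∃! p, p ∈ M ∧ dist x p = Metric.infDist x M

/-- The reach of `M`: the supremum of all `ε` such that every point within distance `ε`
of `M` has a unique nearest point in `M`. -/
noncomputable def reach {d : ℕ} (M : Set (EuclideanSpace ℝ (Fin d))) : ℝ≥0∞ :=
  sSup {ε : ℝ≥0∞ | ∀ x, EMetric.infEdist x M < ε → HasUniqueNearest M x}

/-- `ν` is a normal vector along `M`: continuous, unit length, and orthogonal to all
tangent vectors of `M`. -/
def IsNormalAlong {d : ℕ} (M : Set (EuclideanSpace ℝ (Fin d)))
    (ν : EuclideanSpace ℝ (Fin d) → EuclideanSpace ℝ (Fin d)) : Prop :=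
  ContinuousOn ν M ∧ (∀ x ∈ M, ‖ν x‖ = 1) ∧
  ∀ x ∈ M, ∀ v, IsTangentAt M x v → (inner ℝ (ν x) v : ℝ) = 0

/-!
Fix `ρ > ‖u‖` below the reach, so that every point within `ρ` of `M` has a unique nearest point
(in particular `M` is closed). The core is the classical fact that a nearest point stays nearest
along its normal ray: if `p` is nearest to `y`, then `p` is nearest to `p + a • (y - p)` as long as
`a * infDist y M < ρ`. To see it, maximise `infDist · M - K * dist · y` over a closed ball around
`y`: at an interior maximiser `z`, moving away from the nearest point of `z` (unique, hence
depending continuously on the point) increases the distance to `M` at a rate close to `1 > K`, so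
the maximum lies on the sphere; letting `K → 1` forces equality in the triangle inequality.

For the theorem, let `p t` be a nearest point of `x + t • u`. The implicit function theorem makes
`u` a normal vector in the sense that `⟪u, y - x⟫ = o(‖y - x‖)` on `M`, which gives
`p t - x = o(t)`. Pushing `p t` along its normal ray through `x + t • u` out to distance `‖u‖`
yields points at distance exactly `‖u‖` from `M` that converge to `x + u` as `t → 0⁺`.
-/

open Metric Filter Set Topology

theorem tendsto_of_tendsto_dist_infDist {X α : Type*} [MetricSpace X] [ProperSpace X]
    {M : Set X} (hM : IsClosed M) {z p : X} (hp : ∀ q ∈ M, dist z q = infDist z M → q = p)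
    {l : Filter α} {f : α → X} (hfM : ∀ᶠ a in l, f a ∈ M)
    (hf : Tendsto (fun a => dist z (f a)) l (𝓝 (infDist z M))) :
    Tendsto f l (𝓝 p) := by
  have hball : ∀ ε > 0, ∀ᶠ a in l, f a ∈ closedBall z (infDist z M + ε) := fun ε hε =>
    (hf.eventually (ge_mem_nhds (lt_add_of_pos_right _ hε))).mono fun _ => mem_closedBall'.2
  refine ((isCompact_closedBall z (infDist z M + 1)).inter_right hM
    ).tendsto_nhds_of_unique_mapClusterPt ((hball 1 one_pos).and hfM) fun q ⟨_, hqM⟩ hq =>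
      hp q hqM ?_
  refine le_antisymm (le_of_forall_pos_le_add fun ε hε => mem_closedBall'.1 ?_)
    (infDist_le_dist_of_mem hqM)
  exact isClosed_closedBall.mem_of_mapClusterPt hq (hball ε hε)

theorem tendsto_inv_smul_sub_of_dist_le {E : Type*} [NormedAddCommGroup E]
    [InnerProductSpace ℝ E] {M : Set E} {x u : E}
    (hu : (fun y => inner ℝ u (y - x)) =o[𝓝[M] x] (fun y => y - x))
    {p : ℝ → E} (hpM : ∀ t, p t ∈ M)
    (hp : ∀ t, 0 < t → dist (x + t • u) (p t) ≤ dist (x + t • u) x) :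
    Tendsto (fun t => t⁻¹ • (p t - x)) (𝓝[>] 0) (𝓝 0) := by
  have key : ∀ t, 0 < t → ‖p t - x‖ ^ 2 ≤ 2 * t * inner ℝ u (p t - x) := by
    intro t ht
    have h := pow_le_pow_left₀ dist_nonneg (hp t ht) 2
    rw [dist_eq_norm, dist_eq_norm, add_sub_cancel_left,
      show x + t • u - p t = t • u - (p t - x) by abel, norm_sub_sq_real,
      real_inner_smul_left] at h
    linarith
  have hpx : Tendsto p (𝓝[>] 0) (𝓝[M] x) := by
    refine tendsto_nhdsWithin_iff.2 ⟨?_, Eventually.of_forall hpM⟩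
    rw [tendsto_iff_norm_sub_tendsto_zero]
    refine squeeze_zero' (Eventually.of_forall fun _ => norm_nonneg _) ?_
      (tendsto_nhdsWithin_of_tendsto_nhds
        (Continuous.tendsto' (f := fun t : ℝ => 2 * t * ‖u‖) (by fun_prop) _ _ (by simp)))
    filter_upwards [self_mem_nhdsWithin] with t (ht : 0 < t)
    have h := mul_le_mul_of_nonneg_left (real_inner_le_norm u (p t - x))
      (by positivity : 0 ≤ 2 * t)
    nlinarith [key t ht, norm_nonneg (p t - x), mul_nonneg ht.le (norm_nonneg u)]
  rw [Metric.tendsto_nhds]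
  intro ε hε
  filter_upwards [self_mem_nhdsWithin, (hu.comp_tendsto hpx).bound (by positivity : 0 < ε / 4)]
    with t (ht : 0 < t) hbound
  simp only [Function.comp_apply, Real.norm_eq_abs] at hbound
  rw [dist_zero_right, norm_smul, norm_inv, Real.norm_of_nonneg ht.le, inv_mul_lt_iff₀ ht]
  have h := mul_le_mul_of_nonneg_left ((le_abs_self _).trans hbound) (by positivity : 0 ≤ 2 * t)
  nlinarith [key t ht, norm_nonneg (p t - x), mul_pos ht hε]

theorem tendsto_infDist_add_smul_div {E : Type*} [NormedAddCommGroup E] [NormedSpace ℝ E]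
    {M : Set E} {x u : E} (hx : x ∈ M) {p : ℝ → E}
    (hp : ∀ t, infDist (x + t • u) M = dist (x + t • u) (p t))
    (he : Tendsto (fun t => t⁻¹ • (p t - x)) (𝓝[>] 0) (𝓝 0)) :
    Tendsto (fun t => infDist (x + t • u) M / t) (𝓝[>] 0) (𝓝 ‖u‖) := by
  rw [tendsto_iff_norm_sub_tendsto_zero]
  refine squeeze_zero' (Eventually.of_forall fun _ => norm_nonneg _) ?_
    (tendsto_zero_iff_norm_tendsto_zero.1 he)
  filter_upwards [self_mem_nhdsWithin] with t (ht : 0 < t)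
  have hdx : dist (x + t • u) x = t * ‖u‖ := by
    rw [dist_eq_norm, add_sub_cancel_left, norm_smul, Real.norm_of_nonneg ht.le]
  have h₁ : infDist (x + t • u) M ≤ t * ‖u‖ := hdx ▸ infDist_le_dist_of_mem hx
  have h₂ : t * ‖u‖ ≤ infDist (x + t • u) M + ‖p t - x‖ := by
    rw [← hdx, hp t, ← dist_eq_norm]
    exact dist_triangle _ _ _
  rw [norm_smul, norm_inv, Real.norm_of_nonneg ht.le, Real.norm_eq_abs,
    show infDist (x + t • u) M / t - ‖u‖ = t⁻¹ * (infDist (x + t • u) M - t * ‖u‖) by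
      field_simp, abs_mul, abs_inv, abs_of_pos ht]
  gcongr
  exact abs_sub_le_iff.2 ⟨by linarith, by linarith⟩

theorem tendsto_add_div_infDist_smul_sub {E : Type*} [NormedAddCommGroup E] [NormedSpace ℝ E]
    {M : Set E} {x u : E} (hu : u ≠ 0) (hx : x ∈ M) {p : ℝ → E}
    (hp : ∀ t, infDist (x + t • u) M = dist (x + t • u) (p t))
    (he : Tendsto (fun t => t⁻¹ • (p t - x)) (𝓝[>] 0) (𝓝 0)) :
    Tendsto (fun t => p t + (‖u‖ / infDist (x + t • u) M) • (x + t • u - p t)) (𝓝[>] 0)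
      (𝓝 (x + u)) := by
  have hpt : Tendsto p (𝓝[>] 0) (𝓝 x) := by
    have h := ((tendsto_nhdsWithin_of_tendsto_nhds tendsto_id).smul he).const_add x
    rw [zero_smul, add_zero] at h
    refine h.congr' ?_
    filter_upwards [self_mem_nhdsWithin] with t (ht : 0 < t)
    rw [id, smul_inv_smul₀ ht.ne', add_sub_cancel]
  have hR := (norm_pos_iff.2 hu).ne'
  have h := hpt.add (((tendsto_const_nhds (x := ‖u‖)).div (tendsto_infDist_add_smul_div hx hp he)
    hR).smul ((tendsto_const_nhds (x := u)).sub he))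
  rw [div_self hR, one_smul, sub_zero] at h
  refine h.congr' ?_
  filter_upwards [self_mem_nhdsWithin] with t (ht : 0 < t)
  have hq : x + t • u - p t = t • (u - t⁻¹ • (p t - x)) := by
    rw [smul_sub, smul_inv_smul₀ ht.ne']; abel
  simp only [hq, Pi.div_apply, smul_smul, div_mul_eq_mul_div, div_div_eq_mul_div]

theorem exists_curve_of_fderiv_apply_eq_zero {E : Type*} [NormedAddCommGroup E]
    [NormedSpace ℝ E] [CompleteSpace E] {f : E → ℝ} {x v : E} (hf : ContDiffAt ℝ 1 f x)
    (hDf : fderiv ℝ f x ≠ 0) (hv : fderiv ℝ f x v = 0) :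
    ∃ γ : ℝ → E, γ 0 = x ∧ HasDerivAt γ v 0 ∧
      ∀ᶠ s in 𝓝 0, f (γ s) = f x ∧ ContDiffAt ℝ 1 γ s := by
  obtain ⟨b, hb⟩ : ∃ b, fderiv ℝ f x b = 1 := LinearMap.surjective (f := (fderiv ℝ f x : E →ₗ[ℝ] ℝ))
    (ContinuousLinearMap.coe_injective.ne hDf) 1
  set A : ℝ × ℝ →L[ℝ] E :=
    (ContinuousLinearMap.fst ℝ ℝ ℝ).smulRight v + (ContinuousLinearMap.snd ℝ ℝ ℝ).smulRight b
  have hA : ∀ q : ℝ × ℝ, A q = q.1 • v + q.2 • b := fun q => by simp [A]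
  set g : ℝ × ℝ → ℝ := fun q => f (x + A q)
  have hA0 : x + A (0, 0) = x := by simp [hA]
  have hg : ContDiffAt ℝ 1 g (0, 0) :=
    ContDiffAt.comp (g := f) (0, 0) (by rwa [hA0]) (by fun_prop)
  have hg' : fderiv ℝ g (0, 0) = (fderiv ℝ f x).comp A :=
    (HasFDerivAt.comp (g := f) (0, 0)
      (by rw [hA0]; exact (hf.differentiableAt one_ne_zero).hasFDerivAt)
      (A.hasFDerivAt.const_add x)).fderiv
  have hinv : (fderiv ℝ g (0, 0) ∘L .inr ℝ ℝ ℝ).IsInvertible := by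
    have : fderiv ℝ g (0, 0) ∘L .inr ℝ ℝ ℝ = (ContinuousLinearEquiv.refl ℝ ℝ : ℝ →L[ℝ] ℝ) := by
      ext; simp [hg', hA, hb]
    rw [this]
    exact ContinuousLinearMap.isInvertible_equiv
  obtain ⟨ψ, hψ0, hψ', hψ⟩ : ∃ ψ : ℝ → ℝ, ψ 0 = 0 ∧ HasDerivAt ψ 0 0 ∧
      ∀ᶠ s in 𝓝 0, g (s, ψ s) = g (0, 0) ∧ ContDiffAt ℝ 1 ψ s := by
    refine ⟨hg.implicitFunction one_ne_zero hinv, hg.implicitFunction_apply_self one_ne_zero hinv,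
      ?_, (hg.eventually_apply_implicitFunction one_ne_zero hinv).and
        ((hg.contDiffAt_implicitFunction one_ne_zero hinv).eventually (by simp))⟩
    simpa [hg', hA, hv] using
      (hg.hasStrictFDerivAt_implicitFunction one_ne_zero hinv).hasFDerivAt.hasDerivAt
  refine ⟨fun s => x + s • v + ψ s • b, by simp [hψ0], ?_, ?_⟩
  · exact ((((hasDerivAt_id (0 : ℝ)).smul_const v).const_add x).add
      (hψ'.smul_const b)).congr_deriv (by simp)
  · filter_upwards [hψ] with s hs
    refine ⟨?_, by have := hs.2; fun_prop⟩
    simpa [g, hA, hA0, add_assoc] using hs.1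

section Euclidean

variable {d : ℕ} {M : Set (EuclideanSpace ℝ (Fin d))}

theorem isTangentAt_of_eventually {x v : EuclideanSpace ℝ (Fin d)}
    {γ : ℝ → EuclideanSpace ℝ (Fin d)} (h0 : γ 0 = x) (hγ : HasDerivAt γ v 0)
    (hev : ∀ᶠ s in 𝓝 0, γ s ∈ M ∧ ContDiffAt ℝ 1 γ s) :
    IsTangentAt M x v := by
  obtain ⟨ε, hε, hball⟩ := Metric.eventually_nhds_iff_ball.1 hev
  have hIoo : Ioo (-ε) ε = ball 0 ε := by simp [Real.ball_eq_Ioo]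
  refine ⟨ε, hε, γ, fun s hs => (hball s (hIoo ▸ hs)).1,
    fun s hs => (hball s (hIoo ▸ hs)).2.contDiffWithinAt, h0, hγ⟩

theorem isTangentAt_of_fderiv_apply_eq_zero {x v : EuclideanSpace ℝ (Fin d)}
    {U : Set (EuclideanSpace ℝ (Fin d))} (hU : IsOpen U) (hxU : x ∈ U)
    {f : EuclideanSpace ℝ (Fin d) → ℝ} (hf : ContDiffOn ℝ 1 f U)
    (hMU : M ∩ U = {y ∈ U | f y = 0}) (hx : x ∈ M) (hDf : fderiv ℝ f x ≠ 0)
    (hv : fderiv ℝ f x v = 0) : IsTangentAt M x v := by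
  obtain ⟨γ, h0, hγ, hev⟩ :=
    exists_curve_of_fderiv_apply_eq_zero (hf.contDiffAt (hU.mem_nhds hxU)) hDf hv
  have hfx : f x = 0 := (hMU ▸ ⟨hx, hxU⟩ : x ∈ {y ∈ U | f y = 0}).2
  have hγU : ∀ᶠ s in 𝓝 0, γ s ∈ U := hγ.continuousAt.preimage_mem_nhds (h0 ▸ hU.mem_nhds hxU)
  refine isTangentAt_of_eventually h0 hγ ?_
  filter_upwards [hev, hγU] with s hs hsU
  have : γ s ∈ M ∩ U := hMU ▸ ⟨hsU, hs.1.trans hfx⟩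
  exact ⟨this.1, hs.2⟩

theorem IsC1Hypersurface.isLittleO_inner_sub (hM : IsC1Hypersurface M)
    {x u : EuclideanSpace ℝ (Fin d)} (hx : x ∈ M)
    (hu : ∀ v, IsTangentAt M x v → inner ℝ u v = 0) :
    (fun y => inner ℝ u (y - x)) =o[𝓝[M] x] (fun y => y - x) := by
  obtain ⟨U, hU, hxU, f, hf, hf', hMU⟩ := hM.2 x hx
  have hDf : fderiv ℝ f x ≠ 0 := by simpa [fderivWithin_of_isOpen hU hxU] using hf' x hxU
  obtain ⟨b, hb⟩ : ∃ b, fderiv ℝ f x b = 1 :=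
    LinearMap.surjective (f := (fderiv ℝ f x : EuclideanSpace ℝ (Fin d) →ₗ[ℝ] ℝ))
    (ContinuousLinearMap.coe_injective.ne hDf) 1
  have hinner : ∀ v, inner ℝ u v = inner ℝ u b * fderiv ℝ f x v := fun v => by
    have := hu _ (isTangentAt_of_fderiv_apply_eq_zero hU hxU hf hMU hx hDf
      (v := v - fderiv ℝ f x v • b) (by simp [hb]))
    rw [inner_sub_right, real_inner_smul_right] at this
    linarith
  have hfx : HasFDerivAt f (fderiv ℝ f x) x :=
    ((hf.contDiffAt (hU.mem_nhds hxU)).differentiableAt one_ne_zero).hasFDerivAt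
  have hzero : ∀ᶠ y in 𝓝[M] x, f y = 0 := by
    filter_upwards [inter_mem_nhdsWithin M (hU.mem_nhds hxU)] with y hy
    exact (hMU ▸ hy : y ∈ {y ∈ U | f y = 0}).2
  have hDfo : (fun y => fderiv ℝ f x (y - x)) =o[𝓝[M] x] (fun y => y - x) := by
    refine (hfx.isLittleO.mono nhdsWithin_le_nhds).neg_left.congr' ?_ EventuallyEq.rfl
    filter_upwards [hzero] with y hy
    simp [hy, hzero.self_of_nhdsWithin hx]
  exact (hDfo.const_mul_left (inner ℝ u b)).congr_left fun y => (hinner _).symm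

theorem exists_forall_hasUniqueNearest_of_lt_reach (hM : M.Nonempty) {r : ℝ≥0}
    (hr : (r : ℝ≥0∞) < reach M) :
    ∃ ρ : ℝ, r < ρ ∧ ∀ y, infDist y M < ρ → HasUniqueNearest M y := by
  obtain ⟨ε, hε, hrε⟩ := lt_sSup_iff.1 hr
  obtain ⟨ρ, -, hrρ, hρε⟩ := ENNReal.lt_iff_exists_real_btwn.1 hrε
  refine ⟨ρ, ?_, fun y hy => hε y ?_⟩
  · simpa using (ENNReal.lt_ofReal_iff_toReal_lt ENNReal.coe_ne_top).1 hrρ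
  · calc infEDist y M = ENNReal.ofReal (infDist y M) :=
          (ENNReal.ofReal_toReal (infEDist_ne_top hM)).symm
      _ < ENNReal.ofReal ρ := (ENNReal.ofReal_lt_ofReal_iff_of_nonneg infDist_nonneg).2 hy
      _ < ε := hρε

theorem isClosed_of_forall_hasUniqueNearest {ρ : ℝ} (hρ₀ : 0 < ρ)
    (hρ : ∀ y, infDist y M < ρ → HasUniqueNearest M y) : IsClosed M := by
  refine isClosed_of_closure_subset fun y hy => ?_
  have hy0 : infDist y M = 0 := by rw [← infDist_closure]; exact infDist_zero_of_mem hy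
  obtain ⟨p, ⟨hpM, hyp⟩, -⟩ := hρ y (hy0 ▸ hρ₀)
  rwa [dist_eq_zero.1 (hyp.trans hy0)]

theorem frequently_lt_infDist_add_smul_sub (hMc : IsClosed M) {z p : EuclideanSpace ℝ (Fin d)}
    (hz : HasUniqueNearest M z) (hp : p ∈ M) (hzp : dist z p = infDist z M)
    (hr : 0 < infDist z M) {K : ℝ} (hK₀ : 0 ≤ K) (hK₁ : K < 1) :
    ∃ᶠ s in 𝓝[>] (0 : ℝ), (1 + K * s) * infDist z M < infDist (z + s • (z - p)) M := by
  set r := infDist z M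
  by_contra! h
  choose q hqM hq using fun s : ℝ => hMc.exists_infDist_eq_dist ⟨p, hp⟩ (z + s • (z - p))
  have hzp' : ‖z - p‖ = r := by rw [← dist_eq_norm, hzp]
  have hq_near : ∀ᶠ s in 𝓝[>] (0 : ℝ), dist z (q s) ≤ s * r + (1 + K * s) * r := by
    filter_upwards [h, self_mem_nhdsWithin] with s hs (hs0 : 0 < s)
    calc dist z (q s) ≤ dist z (z + s • (z - p)) + dist (z + s • (z - p)) (q s) :=
          dist_triangle _ _ _
      _ ≤ s * r + (1 + K * s) * r := by
        rw [← hq, dist_eq_norm, sub_add_cancel_left, norm_neg, norm_smul, hzp',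
          Real.norm_of_nonneg hs0.le]
        gcongr
  have hq_tendsto : Tendsto q (𝓝[>] 0) (𝓝 p) := by
    obtain ⟨p', -, hp'⟩ := hz
    rw [hp' p ⟨hp, hzp⟩]
    refine tendsto_of_tendsto_dist_infDist hMc (fun q hqM hq => hp' q ⟨hqM, hq⟩)
      (Eventually.of_forall hqM) (tendsto_of_tendsto_of_tendsto_of_le_of_le' tendsto_const_nhds
        ?_ (Eventually.of_forall fun s => infDist_le_dist_of_mem (hqM s)) hq_near)
    refine tendsto_nhdsWithin_of_tendsto_nhds ?_
    exact Continuous.tendsto' (by fun_prop) _ _ (by simp [r])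
  have hinner : ∀ᶠ s in 𝓝[>] (0 : ℝ), -(K * r ^ 2) ≤ inner ℝ (q s - z) (z - p) := by
    filter_upwards [h, self_mem_nhdsWithin] with s hs (hs0 : 0 < s)
    have hfar : r ≤ ‖q s - z‖ := by
      rw [← dist_eq_norm, dist_comm]; exact infDist_le_dist_of_mem (hqM s)
    have hclose : ‖s • (z - p) - (q s - z)‖ ≤ (1 + K * s) * r := by
      rw [show s • (z - p) - (q s - z) = z + s • (z - p) - q s by abel, ← dist_eq_norm, ← hq]
      exact hs
    have hsq := pow_le_pow_left₀ (norm_nonneg _) hclose 2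
    rw [norm_sub_sq_real, norm_smul, real_inner_smul_left, real_inner_comm,
      Real.norm_of_nonneg hs0.le, hzp'] at hsq
    have hfar2 := pow_le_pow_left₀ hr.le hfar 2
    have hK2 : K * K ≤ 1 := mul_le_one₀ hK₁.le hK₀ hK₁.le
    nlinarith [mul_nonneg (mul_nonneg hs0.le hs0.le) (mul_nonneg (sq_nonneg r) (sub_nonneg.2 hK2))]
  have := ge_of_tendsto ((hq_tendsto.sub_const z).inner tendsto_const_nhds) hinner
  rw [← neg_sub z p, inner_neg_left, real_inner_self_eq_norm_sq, hzp'] at this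
  nlinarith [mul_pos (pow_pos hr 2) (sub_pos.2 hK₁)]

theorem exists_mem_closedBall_add_mul_le_infDist {ρ : ℝ}
    (hρ : ∀ y, infDist y M < ρ → HasUniqueNearest M y) (hMc : IsClosed M)
    {y : EuclideanSpace ℝ (Fin d)} (hy : 0 < infDist y M) {L K : ℝ} (hL : 0 ≤ L)
    (hLρ : infDist y M + L < ρ) (hK₀ : 0 ≤ K) (hK₁ : K < 1) :
    ∃ z ∈ closedBall y L, infDist y M + K * L ≤ infDist z M := by
  set φ : EuclideanSpace ℝ (Fin d) → ℝ := fun z => infDist z M - K * dist z y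
  have hφ : Continuous φ := (continuous_infDist_pt M).sub (by fun_prop)
  obtain ⟨z, hz, hmax⟩ :=
    (isCompact_closedBall y L).exists_isMaxOn (nonempty_closedBall.2 hL) hφ.continuousOn
  have hφz : infDist y M ≤ φ z := by simpa [φ] using hmax (mem_closedBall_self hL)
  refine ⟨z, hz, ?_⟩
  suffices hzy : dist z y = L by simp only [φ, hzy] at hφz; linarith
  by_contra hzy
  have hzy : dist z y < L := (mem_closedBall.1 hz).lt_of_ne hzy
  have hr : 0 < infDist z M := by nlinarith [dist_nonneg (x := z) (y := y)]
  have hzρ : infDist z M < ρ := by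
    linarith [infDist_le_infDist_add_dist (x := z) (y := y) (s := M)]
  obtain ⟨p, ⟨hpM, hpz⟩, -⟩ := hρ z hzρ
  have hsmall : ∀ᶠ s in 𝓝[>] (0 : ℝ), s ∈ Ioo 0 ((L - dist z y) / infDist z M) :=
    Ioo_mem_nhdsGT (div_pos (by linarith) hr)
  obtain ⟨s, hs, hs0, hsL⟩ := ((frequently_lt_infDist_add_smul_sub hMc (hρ z hzρ) hpM hpz hr
    hK₀ hK₁).and_eventually hsmall).exists
  rw [lt_div_iff₀ hr] at hsL
  have hstep : dist (z + s • (z - p)) z = s * infDist z M := by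
    rw [dist_eq_norm, add_sub_cancel_left, norm_smul, ← dist_eq_norm, hpz,
      Real.norm_of_nonneg hs0.le]
  have hdist : dist (z + s • (z - p)) y ≤ dist z y + s * infDist z M := by
    linarith [dist_triangle (z + s • (z - p)) z y]
  have hle : φ (z + s • (z - p)) ≤ φ z := hmax (mem_closedBall.2 (by linarith))
  simp only [φ] at hle
  nlinarith [mul_le_mul_of_nonneg_left hdist hK₀]

theorem infDist_add_smul_sub_eq {ρ : ℝ} (hρ : ∀ y, infDist y M < ρ → HasUniqueNearest M y)
    (hMc : IsClosed M) {y p : EuclideanSpace ℝ (Fin d)} (hp : p ∈ M)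
    (hyp : dist y p = infDist y M) {a : ℝ} (ha : 1 ≤ a) (haρ : a * infDist y M < ρ) :
    infDist (p + a • (y - p)) M = a * infDist y M := by
  set c := infDist y M
  rcases (infDist_nonneg : 0 ≤ c).eq_or_lt with hc | hc
  · obtain rfl : y = p := dist_eq_zero.1 (hyp.trans hc.symm)
    simp [c, infDist_zero_of_mem hp]
  set L := (a - 1) * c
  have hL : 0 ≤ L := mul_nonneg (by linarith) hc.le
  obtain ⟨z, hz, hmax⟩ := (isCompact_closedBall y L).exists_isMaxOn (nonempty_closedBall.2 hL)
    (continuous_infDist_pt M).continuousOn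
  have hzL : c + L ≤ infDist z M := by
    have hK : ∀ᶠ K in 𝓝[<] (1 : ℝ), c + K * L ≤ infDist z M := by
      filter_upwards [Ico_mem_nhdsLT (zero_lt_one' ℝ)] with K ⟨hK₀, hK₁⟩
      obtain ⟨w, hw, hwK⟩ := exists_mem_closedBall_add_mul_le_infDist hρ hMc hc hL
        (by linarith) hK₀ hK₁
      exact hwK.trans (hmax hw)
    refine le_of_tendsto ?_ hK
    exact tendsto_nhdsWithin_of_tendsto_nhds (Continuous.tendsto' (by fun_prop) _ _ (by simp))
  have hzy : dist z y ≤ L := mem_closedBall.1 hz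
  have hzp : infDist z M ≤ dist z p := infDist_le_dist_of_mem hp
  have hsum : ‖(z - y) + (y - p)‖ = ‖z - y‖ + ‖y - p‖ := by
    simp only [sub_add_sub_cancel, ← dist_eq_norm]
    linarith [dist_triangle z y p]
  rw [norm_add_eq_iff_real, ← dist_eq_norm, ← dist_eq_norm, hyp,
    show dist z y = L by linarith [dist_triangle z y p]] at hsum
  have hzy' : z - y = (a - 1) • (y - p) := by
    refine smul_right_injective _ hc.ne' ?_
    change c • (z - y) = c • ((a - 1) • (y - p))
    rw [hsum, smul_smul, mul_comm]
  have hz_eq : p + a • (y - p) = z := by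
    rw [← sub_eq_zero, show p + a • (y - p) - z = (a - 1) • (y - p) - (z - y) by module, hzy',
      sub_self]
  rw [hz_eq]
  linarith [dist_triangle z y p]

theorem infDist_add_eq_norm {ρ : ℝ} (hρ : ∀ y, infDist y M < ρ → HasUniqueNearest M y)
    (hMc : IsClosed M) {x u : EuclideanSpace ℝ (Fin d)} (hx : x ∈ M) (hu : ‖u‖ < ρ)
    (hnormal : (fun y => inner ℝ u (y - x)) =o[𝓝[M] x] (fun y => y - x)) :
    infDist (x + u) M = ‖u‖ := by
  rcases eq_or_ne u 0 with rfl | hu0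
  · simp [infDist_zero_of_mem hx]
  choose p hpM hp using fun t : ℝ => hMc.exists_infDist_eq_dist ⟨x, hx⟩ (x + t • u)
  have he : Tendsto (fun t => t⁻¹ • (p t - x)) (𝓝[>] 0) (𝓝 0) :=
    tendsto_inv_smul_sub_of_dist_le hnormal hpM fun t _ => (hp t).symm.trans_le
      (infDist_le_dist_of_mem hx)
  have hf := tendsto_infDist_add_smul_div hx hp he
  have hbR : ∀ᶠ t in 𝓝[>] 0,
      infDist (p t + (‖u‖ / infDist (x + t • u) M) • (x + t • u - p t)) M = ‖u‖ := by
    filter_upwards [self_mem_nhdsWithin, Ioo_mem_nhdsGT one_pos,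
      hf.eventually (eventually_gt_nhds (norm_pos_iff.2 hu0))] with t (ht : 0 < t) ht₁ hft
    have hft : 0 < infDist (x + t • u) M := (div_pos_iff_of_pos_right ht).1 hft
    have hfu : infDist (x + t • u) M ≤ ‖u‖ := calc
      _ ≤ dist (x + t • u) x := infDist_le_dist_of_mem hx
      _ = t * ‖u‖ := by rw [dist_eq_norm, add_sub_cancel_left, norm_smul, Real.norm_of_nonneg ht.le]
      _ ≤ ‖u‖ := mul_le_of_le_one_left (norm_nonneg u) ht₁.2.le
    have hfρ : ‖u‖ / infDist (x + t • u) M * infDist (x + t • u) M < ρ := by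
      rwa [div_mul_cancel₀ _ hft.ne']
    rw [infDist_add_smul_sub_eq hρ hMc (hpM t) (hp t).symm ((one_le_div hft).2 hfu) hfρ,
      div_mul_cancel₀ _ hft.ne']
  exact tendsto_nhds_unique ((continuous_infDist_pt M).continuousAt.tendsto.comp
    (tendsto_add_div_infDist_smul_sub hu0 hx hp he))
    (tendsto_const_nhds.congr' (hbR.mono fun t h => h.symm))

end Euclidean

theorem stmt15_general {d : ℕ} (M : Set (EuclideanSpace ℝ (Fin d)))
    (hM : IsC1Hypersurface M)
    (x : EuclideanSpace ℝ (Fin d)) (hx : x ∈ M) (u : EuclideanSpace ℝ (Fin d))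
    (hperp : ∀ v, IsTangentAt M x v → (inner ℝ u v : ℝ) = 0)
    (hu : (‖u‖₊ : ℝ≥0∞) < reach M) :
    HasUniqueNearest M (x + u) ∧ Metric.infDist (x + u) M = ‖u‖ ∧
    ∀ y ∈ M, dist (x + u) y = Metric.infDist (x + u) M → y = x := by
  obtain ⟨ρ, huρ, hρ⟩ := exists_forall_hasUniqueNearest_of_lt_reach ⟨x, hx⟩ hu
  have hMc : IsClosed M := isClosed_of_forall_hasUniqueNearest ((norm_nonneg u).trans_lt huρ) hρ
  have hdist : infDist (x + u) M = ‖u‖ :=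
    infDist_add_eq_norm hρ hMc hx huρ (hM.isLittleO_inner_sub hx hperp)
  have hunique := hρ (x + u) (hdist ▸ huρ)
  refine ⟨hunique, hdist, fun y hy hyd => ?_⟩
  obtain ⟨p, -, hp⟩ := hunique
  rw [hp y ⟨hy, hyd⟩, hp x ⟨hx, by rw [hdist, dist_eq_norm, add_sub_cancel_left]⟩]

theorem stmt15 {d : ℕ} (M : Set (EuclideanSpace ℝ (Fin d)))
    (hM : IsC1Hypersurface M) (hreach : 0 < reach M)
    (x : EuclideanSpace ℝ (Fin d)) (hx : x ∈ M) (u : EuclideanSpace ℝ (Fin d))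
    (hperp : ∀ v, IsTangentAt M x v → (inner ℝ u v : ℝ) = 0)
    (hu : (‖u‖₊ : ℝ≥0∞) < reach M) :
    HasUniqueNearest M (x + u) ∧ Metric.infDist (x + u) M = ‖u‖ ∧
    ∀ y ∈ M, dist (x + u) y = Metric.infDist (x + u) M → y = x :=
  stmt15_general M hM x hx u hperp hu
end
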